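/- Let n ≥ 0, k ≥ 2, and let c = s_{n+1} ⋯ s_{n+k} ∈ B_{n+k+1}. Then: (1) for any w ∈ (B_n × S_k) w_{n,k} ⊆ B_{n+k}, one has ℓ(c w c^{−1}) = ℓ(c) + ℓ(w) + ℓ(c^{−1}) and c w c^{−1} ∈ (B_{n+1} × S_k) w_{n+1,k}; (2) for any w ∈ (B_{n+1} × S_k) w_{n+1,k} ⊆ B_{n+k+1}, one has c^{−1} w x ∉ B_{n+k} for every x strictly below c in the Bruhat order, and c^{−1} w c ∈ (B_n × S_k) w_{n,k} if and only if c^{−1} w c ∈ B_{n+k}. -/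

import Mathlib

namespace PaperB

open scoped Classical

def B (n : ℕ) : Subgroup (Equiv.Perm ℤ) where
  carrier := {w | (∀ i : ℤ, w (-i) = - w i) ∧ ∀ i : ℤ, (n : ℤ) < |i| → w i = i}
  one_mem' := ⟨fun _ => rfl, fun _ _ => rfl⟩
  mul_mem' := by
    rintro a b ⟨ha1, ha2⟩ ⟨hb1, hb2⟩
    refine ⟨fun i => ?_, fun i hi => ?_⟩
    · rw [Equiv.Perm.mul_apply, Equiv.Perm.mul_apply, hb1, ha1]
    · rw [Equiv.Perm.mul_apply, hb2 i hi, ha2 i hi]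
  inv_mem' := by
    rintro a ⟨ha1, ha2⟩
    refine ⟨fun i => a.injective ?_, fun i hi => a.injective ?_⟩
    · rw [Equiv.Perm.inv_def, Equiv.apply_symm_apply, ha1, Equiv.apply_symm_apply]
    · rw [Equiv.Perm.inv_def, Equiv.apply_symm_apply, ha2 i hi]

def t : Equiv.Perm ℤ := Equiv.swap (-1) 1

def s (i : ℕ) : Equiv.Perm ℤ :=
  Equiv.swap (i : ℤ) ((i : ℤ) + 1) * Equiv.swap (-(i : ℤ)) (-((i : ℤ) + 1))

def gens (n : ℕ) : Set (Equiv.Perm ℤ) := insert t (s '' Set.Ico 1 n)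

noncomputable def len (n : ℕ) (w : Equiv.Perm ℤ) : ℕ :=
  sInf {l | ∃ L : List (Equiv.Perm ℤ), (∀ g ∈ L, g ∈ gens n) ∧ L.prod = w ∧ L.length = l}

/-- A model of the Iwahori–Hecke algebra `H_{p,q}(Bₘ)`:  a `ℂ`-algebra `H` together with a
family `T w`, `w ∈ Bₘ`, which is linearly independent, satisfies `T 1 = 1`, and satisfies the
standard multiplication rule
`T w * T g = T (w g)` if `ℓ(w g) > ℓ(w)` and
`T w * T g = par(g) T (w g) + (1 - par(g)) T w` otherwise,
where `par t = p` and `par sᵢ = q`. -/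
structure HeckeModel (m : ℕ) (p q : ℂ) (H : Type) [Ring H] [Algebra ℂ H] where
  T : Equiv.Perm ℤ → H
  T_one : T 1 = 1
  T_mul : ∀ w ∈ B m, ∀ g ∈ gens m,
    T w * T g =
      if len m w < len m (w * g) then T (w * g)
      else (if g = t then p else q) • T (w * g) + (1 - if g = t then p else q) • T w
  free : LinearIndependent ℂ (fun w : {x // x ∈ B m} => T w.1)

/-- The element `-w`, given by `(-w)(i) = -(w i)`. -/
def negOf (w : Equiv.Perm ℤ) : Equiv.Perm ℤ := (Equiv.neg ℤ : Equiv.Perm ℤ) * w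

/-- A good involution in `B_k`. -/
def Good (k : ℕ) (w : Equiv.Perm ℤ) : Prop :=
  w ∈ B k ∧ w * w = 1 ∧ ∀ i : ℤ, 1 ≤ i → i ≤ (k : ℤ) → (w i = i ∨ w i < 0)

/-- `a(w)`: the number of `1 ≤ j ≤ m` with `w j = j`. -/
noncomputable def aFix (m : ℕ) (w : Equiv.Perm ℤ) : ℕ :=
  ((Finset.Icc (1 : ℤ) (m : ℤ)).filter fun j => w j = j).card

/-- `d(i, w)`: the number of `i < j ≤ m` with `w j = j`. -/
noncomputable def dFix (m : ℕ) (i : ℤ) (w : Equiv.Perm ℤ) : ℕ :=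
  ((Finset.Ioc i (m : ℤ)).filter fun j => w j = j).card

/-- `c(w)`: the number of `w`-tidy pairs `{i, j}`, i.e. pairs of distinct indices
`1 ≤ i, j ≤ m` with `-w i < j` and `-w j < i`. -/
noncomputable def cTidy (m : ℕ) (w : Equiv.Perm ℤ) : ℕ :=
  (((Finset.Icc (1 : ℤ) (m : ℤ)) ×ˢ (Finset.Icc (1 : ℤ) (m : ℤ))).filter
    fun pr => pr.1 < pr.2 ∧ -w pr.1 < pr.2 ∧ -w pr.2 < pr.1).card

/-- `x = t s₁ s₂ ⋯ s_k ∈ B_{k+1}`. -/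
def xE (k : ℕ) : Equiv.Perm ℤ := (t :: ((List.range k).map fun j => s (j + 1))).prod

/-- `xᵢ = t s₁ ⋯ ŝᵢ ⋯ s_k ∈ B_{k+1}` (the product with `sᵢ` omitted). -/
def xI (k i : ℕ) : Equiv.Perm ℤ :=
  (t :: ((((List.range k).map fun j => j + 1).filter fun j => j ≠ i).map s)).prod


/-- The parabolic subgroup `S_k ⊆ B_k` generated by `s₁, …, s_{k-1}`. -/
def Spar (k : ℕ) : Subgroup (Equiv.Perm ℤ) := Subgroup.closure (s '' Set.Ico 1 k)

/-- `c(-w)` for `w ∈ S_k`: the number of neat pairs of `w`, i.e. pairs `{i,j}` of distinct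
indices `1 ≤ i, j ≤ k` with `w i < j` and `w j < i`. -/
noncomputable def cNeat (k : ℕ) (w : Equiv.Perm ℤ) : ℕ :=
  (((Finset.Icc (1 : ℤ) (k : ℤ)) ×ˢ (Finset.Icc (1 : ℤ) (k : ℤ))).filter
    fun pr => pr.1 < pr.2 ∧ w pr.1 < pr.2 ∧ w pr.2 < pr.1).card

/-- The set `X_{0,k}` of distinguished (minimal length) right coset representatives of
`S_k` in `B_k`. -/
def X0 (k : ℕ) : Set (Equiv.Perm ℤ) :=
  {x | x ∈ B k ∧ ∀ u ∈ Spar k, len k x ≤ len k (u * x)}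

/-- `Succ(w)` for a good involution `w ∈ G_k`. -/
def Succ (k : ℕ) (w : Equiv.Perm ℤ) : Set (Equiv.Perm ℤ) :=
  {xE k * w * (xE k)⁻¹, xE k * w * (xE k)⁻¹ * t} ∪
    {y | ∃ i : ℕ, 1 ≤ i ∧ i ≤ k ∧ w (i : ℤ) = (i : ℤ) ∧ y = xE k * w * (xI k i)⁻¹}

/-- The element `c = s_{n+1} s_{n+2} ⋯ s_{n+k} ∈ B_{n+k+1}`. -/
def cElt (n k : ℕ) : Equiv.Perm ℤ := ((List.range k).map fun j => s (n + 1 + j)).prod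

/-- The palindromic product `s_{n+k} s_{n+k-1} ⋯ s_{n+i} ⋯ s_{n+k-1} s_{n+k}`. -/
def pal (n k i : ℕ) : Equiv.Perm ℤ :=
  (((List.range (k - i)).map fun j => s (n + k - j)) ++ [s (n + i)] ++
    ((List.range (k - i)).map fun j => s (n + i + 1 + j))).prod

/-- The parabolic subgroup `B_n × S_k` of `B_{n+k}`, generated by
`{t, s₁, …, s_{n-1}} ∪ {s_{n+1}, …, s_{n+k-1}}` (with `t` omitted when `n = 0`). -/
def P (n k : ℕ) : Subgroup (Equiv.Perm ℤ) :=
  Subgroup.closure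
    ((if n = 0 then (∅ : Set (Equiv.Perm ℤ)) else {t}) ∪ s '' Set.Ico 1 n ∪
      s '' Set.Ico (n + 1) (n + k))

/-- The factor `S_k` of `B_n × S_k`, generated by `s_{n+1}, …, s_{n+k-1}`. -/
def SparF (n k : ℕ) : Subgroup (Equiv.Perm ℤ) := Subgroup.closure (s '' Set.Ico (n + 1) (n + k))

/-- The set `X_{n,k}` of distinguished (minimal length) right coset representatives of
`B_n × S_k` in `B_{n+k}`. -/
def Xnk (n k : ℕ) : Set (Equiv.Perm ℤ) :=
  {x | x ∈ B (n + k) ∧ ∀ u ∈ P n k, len (n + k) x ≤ len (n + k) (u * x)}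

/-- The strict Bruhat order on `B_m`: `x < w` iff `x ≠ w` and some reduced expression of `w`
has a subword whose product is `x`. -/
def bruhatLT (m : ℕ) (x w : Equiv.Perm ℤ) : Prop :=
  x ≠ w ∧ ∃ L : List (Equiv.Perm ℤ), (∀ g ∈ L, g ∈ gens m) ∧ L.prod = w ∧ L.length = len m w ∧
    ∃ L' : List (Equiv.Perm ℤ), L'.Sublist L ∧ L'.prod = x

/-!
Lengths in `B_m` are computed by the statistic `inv + nsp + neg` of the window `w 1, …, w m`,
so right multiplication by a simple reflection raises the length exactly at an ascent.
Since `w_{n,k}` sends the block `n+1, …, n+k` onto its negative in reverse order, the coset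
`(B_n × S_k) w_{n,k}` consists of the `w ∈ B_{n+k}` with `-w` mapping that block to itself, and
conjugation by `c` shifts the block by one. Multiplying `w` (or `c w⁻¹`) by
`c⁻¹ = s_{n+k} ⋯ s_{n+1}` passes only through ascents, which gives the length identity.
Finally `s_{n+1} ⋯ s_{n+k}` is the only reduced word of `c`, and every proper subword moves
`n+k+1` into the shifted block, where `w` is negative, so `c⁻¹ w x` cannot fix `n+k+1`.
-/

section Generators

lemma t_apply (x : ℤ) : t x = if x = 1 then -1 else if x = -1 then 1 else x := by
  simp only [t, Equiv.swap_apply_def]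
  split_ifs <;> omega

lemma s_apply {i : ℕ} (hi : 1 ≤ i) (x : ℤ) :
    s i x = if x = (i : ℤ) then (i : ℤ) + 1 else if x = (i : ℤ) + 1 then (i : ℤ)
      else if x = -(i : ℤ) then -(i : ℤ) - 1 else if x = -(i : ℤ) - 1 then -(i : ℤ) else x := by
  simp only [s, Equiv.Perm.mul_apply, Equiv.swap_apply_def]
  split_ifs <;> omega

lemma s_apply_of_pos {i : ℕ} (hi : 1 ≤ i) {x : ℤ} (hx : 0 < x) :
    s i x = Equiv.swap (i : ℤ) (i + 1) x := by
  rw [s_apply hi, Equiv.swap_apply_def]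
  split_ifs <;> omega

lemma B_apply_neg {m : ℕ} {v : Equiv.Perm ℤ} (hv : v ∈ B m) (x : ℤ) : v (-x) = -v x := hv.1 x

lemma B_apply_of_lt_abs {m : ℕ} {v : Equiv.Perm ℤ} (hv : v ∈ B m) {x : ℤ} (hx : (m : ℤ) < |x|) :
    v x = x := hv.2 x hx

lemma B_apply_zero {m : ℕ} {v : Equiv.Perm ℤ} (hv : v ∈ B m) : v 0 = 0 := by
  have := B_apply_neg hv 0
  simp only [neg_zero] at this
  omega

lemma B_apply_ne_zero {m : ℕ} {v : Equiv.Perm ℤ} (hv : v ∈ B m) {x : ℤ} (hx : x ≠ 0) : v x ≠ 0 :=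
  fun h => hx (v.injective (h.trans (B_apply_zero hv).symm))

lemma B_abs_apply_le {m : ℕ} {v : Equiv.Perm ℤ} (hv : v ∈ B m) {x : ℤ} (hx : |x| ≤ m) :
    |v x| ≤ m := by
  by_contra! h
  have := v.injective (B_apply_of_lt_abs hv h)
  rw [this] at h
  omega

lemma B_mono {a b : ℕ} (hab : a ≤ b) : B a ≤ B b :=
  fun _ ⟨hneg, hfix⟩ => ⟨hneg, fun i hi => hfix i (by omega)⟩

lemma t_mem_B {m : ℕ} (hm : 1 ≤ m) : t ∈ B m := by
  refine ⟨fun x => ?_, fun x hx => ?_⟩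
  · simp only [t_apply]
    split_ifs <;> omega
  · rw [t_apply]
    rcases abs_cases x with ⟨e, _⟩ | ⟨e, _⟩ <;> split_ifs <;> omega

lemma s_mem_B {m i : ℕ} (hi : 1 ≤ i) (him : i + 1 ≤ m) : s i ∈ B m := by
  refine ⟨fun x => ?_, fun x hx => ?_⟩
  · simp only [s_apply hi]
    split_ifs <;> omega
  · rw [s_apply hi]
    rcases abs_cases x with ⟨e, _⟩ | ⟨e, _⟩ <;> split_ifs <;> omega

lemma t_mul_self : t * t = 1 := Equiv.swap_mul_self _ _

lemma s_mul_self {i : ℕ} (hi : 1 ≤ i) : s i * s i = 1 := by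
  ext x
  simp only [Equiv.Perm.mul_apply, s_apply hi, Equiv.Perm.one_apply]
  split_ifs <;> omega

lemma s_inv {i : ℕ} (hi : 1 ≤ i) : (s i)⁻¹ = s i := inv_eq_of_mul_eq_one_left (s_mul_self hi)

lemma gens_mem_B {m : ℕ} (hm : 1 ≤ m) {g : Equiv.Perm ℤ} (hg : g ∈ gens m) : g ∈ B m := by
  rcases hg with rfl | ⟨i, ⟨hi, him⟩, rfl⟩
  exacts [t_mem_B hm, s_mem_B hi (by omega)]

lemma gens_mul_self {m : ℕ} {g : Equiv.Perm ℤ} (hg : g ∈ gens m) : g * g = 1 := by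
  rcases hg with rfl | ⟨i, ⟨hi, -⟩, rfl⟩
  exacts [t_mul_self, s_mul_self hi]

lemma list_prod_mem_B {m : ℕ} (hm : 1 ≤ m) {L : List (Equiv.Perm ℤ)} (hL : ∀ g ∈ L, g ∈ gens m) :
    L.prod ∈ B m :=
  Subgroup.list_prod_mem _ fun g hg => gens_mem_B hm (hL g hg)

lemma eq_one_of_forall_apply_eq {m : ℕ} {v : Equiv.Perm ℤ} (hv : v ∈ B m)
    (hfix : ∀ x : ℤ, 1 ≤ x → x ≤ m → v x = x) : v = 1 := by
  have hpos : ∀ x : ℤ, 0 < x → v x = x := fun x hx =>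
    if h : x ≤ m then hfix x hx h else B_apply_of_lt_abs hv (by rw [abs_of_pos hx]; omega)
  ext x
  rcases lt_trichotomy x 0 with hx | rfl | hx
  · have := hpos (-x) (by omega)
    rw [B_apply_neg hv] at this
    simp only [Equiv.Perm.one_apply]
    omega
  · exact B_apply_zero hv
  · exact hpos x hx

end Generators

section LengthStatistic

open Finset

noncomputable def pairSet (lo hi : ℤ) (R : ℤ → ℤ → Prop) [DecidableRel R] (f : ℤ → ℤ) :
    Finset (ℤ × ℤ) :=
  {pq ∈ Icc lo hi ×ˢ Icc lo hi | pq.1 < pq.2 ∧ R (f pq.1) (f pq.2)}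

/-- `inv + nsp + neg` of the window `f 1, …, f m`: for `f ∈ B_m` this is the Coxeter length
(Björner–Brenti, Prop. 8.1.1). -/
noncomputable def lenStat (m : ℕ) (f : ℤ → ℤ) : ℕ :=
  #(pairSet 1 m (fun a b => b < a) f) + #(pairSet 1 m (fun a b => a + b < 0) f) +
    #{x ∈ Icc 1 (m : ℤ) | f x < 0}

variable {lo hi : ℤ} {R : ℤ → ℤ → Prop} [DecidableRel R]

lemma mem_pairSet {f : ℤ → ℤ} {p q : ℤ} :
    (p, q) ∈ pairSet lo hi R f ↔ (lo ≤ p ∧ p ≤ hi) ∧ (lo ≤ q ∧ q ≤ hi) ∧ p < q ∧ R (f p) (f q) := by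
  simp only [pairSet, mem_filter, mem_product, mem_Icc, and_assoc]

lemma pairSet_congr {f g : ℤ → ℤ} (h : Set.EqOn f g (Set.Icc lo hi)) :
    pairSet lo hi R f = pairSet lo hi R g := by
  ext ⟨p, q⟩
  simp only [mem_pairSet]
  constructor <;> rintro ⟨hp, hq, hlt, hR⟩
  · exact ⟨hp, hq, hlt, h hp ▸ h hq ▸ hR⟩
  · exact ⟨hp, hq, hlt, (h hp).symm ▸ (h hq).symm ▸ hR⟩

lemma lenStat_congr {m : ℕ} {f g : ℤ → ℤ} (h : Set.EqOn f g (Set.Icc 1 m)) :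
    lenStat m f = lenStat m g := by
  unfold lenStat
  rw [pairSet_congr h, pairSet_congr h]
  congr 2
  exact filter_congr fun x hx => by rw [h (by simpa using hx)]

/-- Precomposing with the transposition `σ = (i, i + 1)` permutes the pairs other than
`(i, i + 1)` via `(p, q) ↦ (σ p, σ q)`. -/
lemma card_pairSet_comp_swap_erase {i : ℤ} (hlo : lo ≤ i) (hhi : i + 1 ≤ hi) (f : ℤ → ℤ) :
    #((pairSet lo hi R (f ∘ Equiv.swap i (i + 1))).erase (i, i + 1)) =
      #((pairSet lo hi R f).erase (i, i + 1)) := by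
  set σ := Equiv.swap i (i + 1)
  have hσ : ∀ x, σ (σ x) = x := Equiv.swap_apply_self _ _
  have hmove : ∀ p q, lo ≤ p → q ≤ hi → p < q → ¬(p = i ∧ q = i + 1) →
      (lo ≤ σ p ∧ σ p ≤ hi) ∧ (lo ≤ σ q ∧ σ q ≤ hi) ∧ σ p < σ q ∧ ¬(σ p = i ∧ σ q = i + 1) := by
    intro p q hp hq hpq hne
    simp only [σ, Equiv.swap_apply_def]
    split_ifs <;> omega
  refine card_nbij' (fun pq => (σ pq.1, σ pq.2)) (fun pq => (σ pq.1, σ pq.2)) ?_ ?_ ?_ ?_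
  · rintro ⟨p, q⟩ hpq
    simp only [coe_erase, Set.mem_sdiff, mem_coe, mem_pairSet, Set.mem_singleton_iff,
      Prod.mk.injEq, Function.comp_apply] at hpq ⊢
    obtain ⟨⟨⟨hp, -⟩, ⟨-, hq⟩, hlt, hR⟩, hne⟩ := hpq
    obtain ⟨h1, h2, h3, h4⟩ := hmove p q hp hq hlt hne
    exact ⟨⟨h1, h2, h3, hR⟩, h4⟩
  · rintro ⟨p, q⟩ hpq
    simp only [coe_erase, Set.mem_sdiff, mem_coe, mem_pairSet, Set.mem_singleton_iff,
      Prod.mk.injEq, Function.comp_apply, hσ] at hpq ⊢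
    obtain ⟨⟨⟨hp, -⟩, ⟨-, hq⟩, hlt, hR⟩, hne⟩ := hpq
    obtain ⟨h1, h2, h3, h4⟩ := hmove p q hp hq hlt hne
    exact ⟨⟨h1, h2, h3, hR⟩, h4⟩
  all_goals
    rintro ⟨p, q⟩ -
    simp [hσ]

lemma card_pairSet_comp_swap {i : ℤ} (hlo : lo ≤ i) (hhi : i + 1 ≤ hi) (f : ℤ → ℤ) :
    #(pairSet lo hi R (f ∘ Equiv.swap i (i + 1))) + (if R (f i) (f (i + 1)) then 1 else 0) =
      #(pairSet lo hi R f) + (if R (f (i + 1)) (f i) then 1 else 0) := by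
  have card_eq : ∀ g, #(pairSet lo hi R g) = #((pairSet lo hi R g).erase (i, i + 1)) +
      if R (g i) (g (i + 1)) then 1 else 0 := by
    intro g
    split_ifs with hR
    · exact (card_erase_add_one
        (mem_pairSet.2 ⟨⟨hlo, by omega⟩, ⟨by omega, hhi⟩, by omega, hR⟩)).symm
    · rw [erase_eq_of_notMem fun h => hR (mem_pairSet.1 h).2.2.2, add_zero]
  have h1 := card_eq (f ∘ Equiv.swap i (i + 1))
  simp only [Function.comp_apply, Equiv.swap_apply_left, Equiv.swap_apply_right] at h1
  rw [h1, card_eq f, card_pairSet_comp_swap_erase hlo hhi]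
  ring

lemma card_pairSet_eq_add (f : ℤ → ℤ) :
    #(pairSet lo hi R f) =
      #{q ∈ Icc (lo + 1) hi | R (f lo) (f q)} + #(pairSet (lo + 1) hi R f) := by
  rw [← card_filter_add_card_filter_not (fun pq : ℤ × ℤ => pq.1 = lo)]
  congr 1
  · refine card_nbij' Prod.snd (fun q => (lo, q)) ?_ ?_ ?_ ?_
    · rintro ⟨p, q⟩ h
      simp only [coe_filter, mem_pairSet, mem_Icc, Set.mem_ofPred_eq] at h ⊢
      obtain ⟨⟨-, ⟨-, hq⟩, hlt, hR⟩, rfl⟩ := h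
      exact ⟨⟨by omega, hq⟩, hR⟩
    · intro q h
      simp only [coe_filter, mem_pairSet, mem_Icc, Set.mem_ofPred_eq] at h ⊢
      exact ⟨⟨⟨le_rfl, by omega⟩, ⟨by omega, h.1.2⟩, by omega, h.2⟩, trivial⟩
    · rintro ⟨p, q⟩ h
      simp only [coe_filter, Set.mem_ofPred_eq] at h
      simp [h.2]
    · intro q _
      rfl
  · congr 1
    ext ⟨p, q⟩
    simp only [mem_filter, mem_pairSet]
    constructor
    · rintro ⟨⟨⟨hp, hp'⟩, ⟨hq, hq'⟩, hlt, hR⟩, hne⟩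
      exact ⟨⟨by omega, hp'⟩, ⟨by omega, hq'⟩, hlt, hR⟩
    · rintro ⟨⟨hp, hp'⟩, ⟨hq, hq'⟩, hlt, hR⟩
      exact ⟨⟨⟨by omega, hp'⟩, ⟨by omega, hq'⟩, hlt, hR⟩, by omega⟩

lemma lenStat_comp_swap {m : ℕ} {i : ℤ} (hi : 1 ≤ i) (him : i + 1 ≤ m) {f : ℤ → ℤ}
    (hasc : f i < f (i + 1)) : lenStat m (f ∘ Equiv.swap i (i + 1)) = lenStat m f + 1 := by
  have hinv := card_pairSet_comp_swap (R := fun a b => b < a) hi him f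
  have hnsp := card_pairSet_comp_swap (R := fun a b => a + b < 0) hi him f
  rw [if_neg (by omega), if_pos hasc] at hinv
  have hneg : #{x ∈ Icc 1 (m : ℤ) | (f ∘ Equiv.swap i (i + 1)) x < 0} =
      #{x ∈ Icc 1 (m : ℤ) | f x < 0} := by
    refine card_nbij' (Equiv.swap i (i + 1)) (Equiv.swap i (i + 1)) ?_ ?_ ?_ ?_ <;>
      intro x hx <;>
      simp only [coe_filter, mem_Icc, Set.mem_ofPred_eq, Function.comp_apply,
        Equiv.swap_apply_self] at hx ⊢
    all_goals
      refine ⟨?_, hx.2⟩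
      rw [Equiv.swap_apply_def]
      split_ifs <;> omega
  unfold lenStat
  split_ifs at hnsp <;> omega

lemma lenStat_of_eq_neg_one {m : ℕ} (hm : 1 ≤ m) {f g : ℤ → ℤ} (hf : 0 < f 1)
    (hg1 : g 1 = -f 1) (hg : ∀ x, 2 ≤ x → g x = f x) : lenStat m g = lenStat m f + 1 := by
  have hsplit : ∀ (R : ℤ → ℤ → Prop) [DecidableRel R] (h : ℤ → ℤ), #(pairSet 1 m R h) =
      #{q ∈ Icc 2 (m : ℤ) | R (h 1) (h q)} + #(pairSet 2 m R h) :=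
    fun R _ h => card_pairSet_eq_add h
  have hrest : ∀ (R : ℤ → ℤ → Prop) [DecidableRel R], pairSet 2 m R g = pairSet 2 m R f :=
    fun R _ => pairSet_congr fun x hx => hg x hx.1
  have hfirst : ∀ (P Q : ℤ → Prop) [DecidablePred P] [DecidablePred Q],
      (∀ x, 2 ≤ x → (P x ↔ Q x)) → #{q ∈ Icc 2 (m : ℤ) | P q} = #{q ∈ Icc 2 (m : ℤ) | Q q} :=
    fun P Q _ _ h => congrArg card (filter_congr fun x hx => h x (mem_Icc.1 hx).1)
  have hinv := hfirst (fun q => g q < g 1) (fun q => f 1 + f q < 0) fun q hq => by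
    rw [hg q hq, hg1]; omega
  have hnsp := hfirst (fun q => g 1 + g q < 0) (fun q => f q < f 1) fun q hq => by
    rw [hg q hq, hg1]; omega
  have hneg_eq := hfirst (fun x => g x < 0) (fun x => f x < 0) fun x hx => by rw [hg x hx]
  have hneg : ∀ h : ℤ → ℤ, #{x ∈ Icc 1 (m : ℤ) | h x < 0} =
      #{x ∈ Icc 2 (m : ℤ) | h x < 0} + if h 1 < 0 then 1 else 0 := by
    intro h
    rw [show Icc 1 (m : ℤ) = insert 1 (Icc 2 (m : ℤ)) by ext; simp; omega, filter_insert]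
    split_ifs
    · rw [card_insert_of_notMem (by simp)]
    · rfl
  unfold lenStat
  rw [hsplit _ g, hsplit _ g, hsplit _ f, hsplit _ f, hneg g, hneg f, hrest, hrest, hinv, hnsp,
    hneg_eq, hg1]
  split_ifs <;> omega

end LengthStatistic

section Length

lemma lenStat_one (m : ℕ) : lenStat m ⇑(1 : Equiv.Perm ℤ) = 0 := by
  unfold lenStat pairSet
  rw [Finset.filter_false_of_mem, Finset.filter_false_of_mem, Finset.filter_false_of_mem]
  · rfl
  all_goals
    intro x hx
    simp only [Finset.mem_product, Finset.mem_Icc, Equiv.Perm.one_apply] at hx ⊢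
    omega

lemma lenStat_mul_s {m i : ℕ} (hi : 1 ≤ i) (him : i + 1 ≤ m) {v : Equiv.Perm ℤ}
    (hasc : v i < v (i + 1)) : lenStat m ⇑(v * s i) = lenStat m v + 1 := by
  rw [← lenStat_comp_swap (m := m) (by exact_mod_cast hi) (by exact_mod_cast him) hasc]
  exact lenStat_congr fun x hx => by
    simp only [Equiv.Perm.mul_apply, Function.comp_apply, s_apply_of_pos hi (hx.1 : (1 : ℤ) ≤ x)]

lemma lenStat_mul_t {m : ℕ} (hm : 1 ≤ m) {v : Equiv.Perm ℤ} (hv : v ∈ B m) (hpos : 0 < v 1) :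
    lenStat m ⇑(v * t) = lenStat m v + 1 := by
  refine lenStat_of_eq_neg_one hm hpos ?_ fun x hx => ?_ <;>
    simp only [Equiv.Perm.mul_apply, t_apply]
  · simp [B_apply_neg hv]
  · rw [if_neg (by omega), if_neg (by omega)]

lemma lenStat_mul_s_of_gt {m i : ℕ} (hi : 1 ≤ i) (him : i + 1 ≤ m) {v : Equiv.Perm ℤ}
    (hdesc : v (i + 1) < v i) : lenStat m v = lenStat m ⇑(v * s i) + 1 := by
  have hvs : (v * s i) i < (v * s i) (i + 1) := by
    simp only [Equiv.Perm.mul_apply, s_apply hi]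
    simpa using hdesc
  simpa [mul_assoc, s_mul_self hi] using lenStat_mul_s hi him hvs

lemma lenStat_mul_t_of_neg {m : ℕ} (hm : 1 ≤ m) {v : Equiv.Perm ℤ} (hv : v ∈ B m)
    (hneg : v 1 < 0) : lenStat m v = lenStat m ⇑(v * t) + 1 := by
  have hvt : 0 < (v * t) 1 := by simp [t_apply, B_apply_neg hv, hneg]
  simpa [mul_assoc, t_mul_self] using lenStat_mul_t hm ((B m).mul_mem hv (t_mem_B hm)) hvt

lemma lenStat_mul_gens {m : ℕ} (hm : 1 ≤ m) {v g : Equiv.Perm ℤ} (hv : v ∈ B m)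
    (hg : g ∈ gens m) :
    lenStat m ⇑(v * g) = lenStat m v + 1 ∨ lenStat m v = lenStat m ⇑(v * g) + 1 := by
  rcases hg with rfl | ⟨i, ⟨hi, him⟩, rfl⟩
  · rcases lt_or_gt_of_ne (B_apply_ne_zero hv one_ne_zero) with hneg | hpos
    exacts [Or.inr (lenStat_mul_t_of_neg hm hv hneg), Or.inl (lenStat_mul_t hm hv hpos)]
  · rcases lt_or_gt_of_ne fun h : v i = v (i + 1) => absurd (v.injective h) (by omega)
      with hasc | hdesc
    exacts [Or.inl (lenStat_mul_s hi (by omega) hasc),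
      Or.inr (lenStat_mul_s_of_gt hi (by omega) hdesc)]

lemma lenStat_list_prod_le {m : ℕ} (hm : 1 ≤ m) {L : List (Equiv.Perm ℤ)}
    (hL : ∀ g ∈ L, g ∈ gens m) : lenStat m ⇑L.prod ≤ L.length := by
  induction L using List.reverseRecOn with
  | nil => simpa using (lenStat_one m).le
  | append_singleton L g ih =>
    have hL' : ∀ x ∈ L, x ∈ gens m := fun x hx => hL x (List.mem_append_left _ hx)
    have := ih hL'
    have := lenStat_mul_gens hm (list_prod_mem_B hm hL') (hL g (by simp))
    simp only [List.prod_append, List.prod_singleton, List.length_append, List.length_singleton]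
    omega

lemma eq_self_of_lt_add_one {f : ℤ → ℤ} {lo hi : ℤ} (hlo : lo ≤ f lo) (hhi : f hi ≤ hi)
    (hstep : ∀ x, lo ≤ x → x < hi → f x < f (x + 1)) : ∀ x, lo ≤ x → x ≤ hi → f x = x := by
  have up : ∀ x, lo ≤ x → x ≤ hi → x ≤ f x := by
    refine Int.leInduction (fun _ => hlo) fun x hx ih hxhi => ?_
    have := hstep x hx (by omega)
    have := ih (by omega)
    omega
  have down : ∀ x, x ≤ hi → lo ≤ x → f x ≤ x := by
    refine Int.leInductionDown (fun _ => hhi) fun x hx ih hlox => ?_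
    have := hstep (x - 1) hlox (by omega)
    have := ih (by omega)
    simp only [sub_add_cancel] at *
    omega
  exact fun x h1 h2 => le_antisymm (down x h2 h1) (up x h1 h2)

lemma exists_descent {m : ℕ} {v : Equiv.Perm ℤ} (hv : v ∈ B m) (hne : v ≠ 1) :
    v 1 < 0 ∨ ∃ i : ℕ, 1 ≤ i ∧ i + 1 ≤ m ∧ v (i + 1) < v i := by
  by_contra! h
  obtain ⟨hpos, hincr⟩ := h
  have hv1 := B_apply_ne_zero hv one_ne_zero
  refine hne (eq_one_of_forall_apply_eq hv (eq_self_of_lt_add_one (by omega) ?_ fun x h1 h2 => ?_))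
  · have := B_abs_apply_le hv (x := m) (by simp)
    exact (le_abs_self _).trans this
  · have := hincr x.toNat (by omega) (by omega)
    rw [Int.toNat_of_nonneg (by omega)] at this
    exact lt_of_le_of_ne this fun h => by have := v.injective h; omega

lemma exists_lenStat_descent {m : ℕ} (hm : 1 ≤ m) {v : Equiv.Perm ℤ} (hv : v ∈ B m)
    (hne : v ≠ 1) : ∃ g ∈ gens m, lenStat m v = lenStat m ⇑(v * g) + 1 := by
  rcases exists_descent hv hne with hneg | ⟨i, hi, him, hdesc⟩
  · exact ⟨t, Set.mem_insert _ _, lenStat_mul_t_of_neg hm hv hneg⟩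
  · exact ⟨s i, Set.mem_insert_of_mem _ ⟨i, ⟨hi, by omega⟩, rfl⟩, lenStat_mul_s_of_gt hi him hdesc⟩

lemma exists_word_length_eq_lenStat {m : ℕ} (hm : 1 ≤ m) {v : Equiv.Perm ℤ} (hv : v ∈ B m) :
    ∃ L : List (Equiv.Perm ℤ), (∀ g ∈ L, g ∈ gens m) ∧ L.prod = v ∧ L.length = lenStat m v := by
  induction hN : lenStat m v using Nat.strong_induction_on generalizing v with
  | _ N ih =>
    by_cases hne : v = 1
    · subst hne
      exact ⟨[], by simp, rfl, by rw [← hN, lenStat_one]; rfl⟩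
    obtain ⟨g, hg, hdesc⟩ := exists_lenStat_descent hm hv hne
    obtain ⟨L, hL, hprod, hlen⟩ :=
      ih _ (by omega) ((B m).mul_mem hv (gens_mem_B hm hg)) rfl
    refine ⟨L ++ [g], ?_, ?_, ?_⟩
    · simpa [or_imp, forall_and] using ⟨hL, hg⟩
    · rw [List.prod_append, List.prod_singleton, hprod, mul_assoc, gens_mul_self hg, mul_one]
    · simp only [List.length_append, List.length_singleton]
      omega

lemma len_le_length {m : ℕ} {v : Equiv.Perm ℤ} {L : List (Equiv.Perm ℤ)}
    (hL : ∀ g ∈ L, g ∈ gens m) (hprod : L.prod = v) : len m v ≤ L.length :=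
  Nat.sInf_le ⟨L, hL, hprod, rfl⟩

theorem len_eq_lenStat {m : ℕ} (hm : 1 ≤ m) {v : Equiv.Perm ℤ} (hv : v ∈ B m) :
    len m v = lenStat m v := by
  obtain ⟨L, hL, hprod, hlen⟩ := exists_word_length_eq_lenStat hm hv
  obtain ⟨L', hL', hprod', hlen'⟩ := Nat.sInf_mem (s := {l | ∃ L : List (Equiv.Perm ℤ),
    (∀ g ∈ L, g ∈ gens m) ∧ L.prod = v ∧ L.length = l}) ⟨_, L, hL, hprod, rfl⟩
  have := lenStat_list_prod_le hm hL'
  rw [hprod', hlen'] at this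
  exact le_antisymm (hlen ▸ len_le_length hL hprod) this

lemma exists_reduced_word {m : ℕ} (hm : 1 ≤ m) {v : Equiv.Perm ℤ} (hv : v ∈ B m) :
    ∃ L : List (Equiv.Perm ℤ), (∀ g ∈ L, g ∈ gens m) ∧ L.prod = v ∧ L.length = len m v :=
  len_eq_lenStat hm hv ▸ exists_word_length_eq_lenStat hm hv

lemma len_one (m : ℕ) : len m 1 = 0 :=
  Nat.le_zero.1 (len_le_length (L := []) (by simp) rfl)

lemma len_mul_s {m i : ℕ} (hi : 1 ≤ i) (him : i + 1 ≤ m) {v : Equiv.Perm ℤ} (hv : v ∈ B m)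
    (hasc : v i < v (i + 1)) : len m (v * s i) = len m v + 1 := by
  rw [len_eq_lenStat (by omega) ((B m).mul_mem hv (s_mem_B hi him)), len_eq_lenStat (by omega) hv,
    lenStat_mul_s hi him hasc]

lemma len_mul_s_of_gt {m i : ℕ} (hi : 1 ≤ i) (him : i + 1 ≤ m) {v : Equiv.Perm ℤ}
    (hv : v ∈ B m) (hdesc : v (i + 1) < v i) : len m v = len m (v * s i) + 1 := by
  rw [len_eq_lenStat (by omega) ((B m).mul_mem hv (s_mem_B hi him)), len_eq_lenStat (by omega) hv,
    lenStat_mul_s_of_gt hi him hdesc]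

lemma len_mul_t {m : ℕ} (hm : 1 ≤ m) {v : Equiv.Perm ℤ} (hv : v ∈ B m) (hpos : 0 < v 1) :
    len m (v * t) = len m v + 1 := by
  rw [len_eq_lenStat hm ((B m).mul_mem hv (t_mem_B hm)), len_eq_lenStat hm hv,
    lenStat_mul_t hm hv hpos]

lemma len_mul_t_of_neg {m : ℕ} (hm : 1 ≤ m) {v : Equiv.Perm ℤ} (hv : v ∈ B m) (hneg : v 1 < 0) :
    len m v = len m (v * t) + 1 := by
  rw [len_eq_lenStat hm ((B m).mul_mem hv (t_mem_B hm)), len_eq_lenStat hm hv,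
    lenStat_mul_t_of_neg hm hv hneg]

lemma len_inv_le {m : ℕ} (hm : 1 ≤ m) {v : Equiv.Perm ℤ} (hv : v ∈ B m) : len m v⁻¹ ≤ len m v := by
  obtain ⟨L, hL, hprod, hlen⟩ := exists_reduced_word hm hv
  have hmap : L.map (·⁻¹) = L :=
    List.map_congr_left (fun g hg => inv_eq_of_mul_eq_one_left (gens_mul_self (hL g hg))) |>.trans
      L.map_id
  refine hlen ▸ List.length_reverse (as := L) ▸ len_le_length (L := L.reverse)
    (fun g hg => hL g (List.mem_reverse.1 hg)) ?_
  rw [← hprod, List.prod_inv_reverse, hmap]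

lemma len_inv {m : ℕ} (hm : 1 ≤ m) {v : Equiv.Perm ℤ} (hv : v ∈ B m) : len m v⁻¹ = len m v :=
  le_antisymm (len_inv_le hm hv) (by simpa using len_inv_le hm ((B m).inv_mem hv))

end Length

section Parabolic

lemma mapsTo_perm_inv {α : Type*} {σ : Equiv.Perm α} {S : Set α} (hS : S.Finite)
    (h : Set.MapsTo σ S S) : Set.MapsTo ⇑σ⁻¹ S S := by
  intro y hy
  obtain ⟨x, hx, rfl⟩ := ((hS.injOn_iff_bijOn_of_mapsTo h).1 σ.injective.injOn).surjOn hy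
  simpa using hx

lemma mapsTo_neg_inv {m : ℕ} {v : Equiv.Perm ℤ} (hv : v ∈ B m) {a b : ℤ}
    (h : Set.MapsTo (fun x => -v x) (Set.Icc a b) (Set.Icc a b)) :
    Set.MapsTo (fun x => -v⁻¹ x) (Set.Icc a b) (Set.Icc a b) := by
  intro y hy
  have := mapsTo_perm_inv (σ := Equiv.neg ℤ * v) (Set.finite_Icc a b) h hy
  rwa [mul_inv_rev, Equiv.Perm.mul_apply, show (Equiv.neg ℤ)⁻¹ y = -y from rfl,
    B_apply_neg ((B m).inv_mem hv)] at this

lemma mem_B_and_mapsTo_of_mem_P {n k : ℕ} {v : Equiv.Perm ℤ} (hv : v ∈ P n k) :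
    v ∈ B (n + k) ∧
      Set.MapsTo v (Set.Icc ((n : ℤ) + 1) (n + k)) (Set.Icc ((n : ℤ) + 1) (n + k)) := by
  induction hv using Subgroup.closure_induction with
  | mem g hg =>
    rcases hg with (hg | ⟨i, ⟨hi, hin⟩, rfl⟩) | ⟨i, ⟨hi, hin⟩, rfl⟩
    · split_ifs at hg with hn
      · exact hg.elim
      rw [Set.mem_singleton_iff.1 hg]
      refine ⟨t_mem_B (by omega), fun x hx => ?_⟩
      simp only [Set.mem_Icc, t_apply] at hx ⊢
      split_ifs <;> omega
    all_goals
      refine ⟨s_mem_B (by omega) (by omega), fun x hx => ?_⟩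
      simp only [Set.mem_Icc, s_apply (show 1 ≤ i by omega)] at hx ⊢
      split_ifs <;> omega
  | one => exact ⟨one_mem _, Set.mapsTo_id _⟩
  | mul a b _ _ ha hb => exact ⟨mul_mem ha.1 hb.1, ha.2.comp hb.2⟩
  | inv a _ ha => exact ⟨inv_mem ha.1, mapsTo_perm_inv (Set.finite_Icc _ _) ha.2⟩

lemma apply_lt_apply_add_one_of_mapsTo {n k : ℕ} (hk : 1 ≤ k) {v : Equiv.Perm ℤ}
    (hv : v ∈ B (n + k))
    (hmaps : Set.MapsTo v (Set.Icc ((n : ℤ) + 1) (n + k)) (Set.Icc ((n : ℤ) + 1) (n + k))) :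
    v n < v (n + 1) := by
  by_contra! hle
  have hvn1 := hmaps (x := n + 1) ⟨le_rfl, by omega⟩
  have hvn := B_abs_apply_le hv (x := n) (by rw [abs_of_nonneg (by omega)]; omega)
  rw [Set.mem_Icc] at hvn1
  have := mapsTo_perm_inv (Set.finite_Icc _ _) hmaps (x := v n)
    ⟨by omega, (le_abs_self _).trans hvn⟩
  simp only [Equiv.Perm.coe_inv, Equiv.symm_apply_apply, Set.mem_Icc] at this
  omega

lemma mem_P_of_mapsTo {n k : ℕ} {v : Equiv.Perm ℤ} (hv : v ∈ B (n + k))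
    (hmaps : Set.MapsTo v (Set.Icc ((n : ℤ) + 1) (n + k)) (Set.Icc ((n : ℤ) + 1) (n + k))) :
    v ∈ P n k := by
  induction hN : len (n + k) v using Nat.strong_induction_on generalizing v with
  | _ N ih =>
    have step : ∀ g ∈ P n k, g * g = 1 → len (n + k) v = len (n + k) (v * g) + 1 →
        v ∈ P n k := by
      intro g hg hgg hlen
      have hgB := mem_B_and_mapsTo_of_mem_P hg
      have hvg : v * g ∈ P n k :=
        ih _ (by omega) ((B _).mul_mem hv hgB.1) (hmaps.comp hgB.2) rfl
      simpa [mul_assoc, hgg] using (P n k).mul_mem hvg hg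
    by_cases hne : v = 1
    · exact hne ▸ one_mem _
    have hnk : 1 ≤ n + k := by
      by_contra! h
      exact hne (eq_one_of_forall_apply_eq hv fun x h1 h2 => by omega)
    rcases exists_descent hv hne with hneg | ⟨i, hi, him, hdesc⟩
    · have hn : n ≠ 0 := by
        rintro rfl
        have := apply_lt_apply_add_one_of_mapsTo (by omega) hv hmaps
        rw [Nat.cast_zero, B_apply_zero hv, zero_add] at this
        omega
      refine step t (Subgroup.subset_closure ?_) t_mul_self (len_mul_t_of_neg hnk hv hneg)
      simp [hn]
    · have hin : i ≠ n := by
        rintro rfl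
        have := apply_lt_apply_add_one_of_mapsTo (by omega) hv hmaps
        omega
      refine step (s i) (Subgroup.subset_closure ?_) (s_mul_self hi)
        (len_mul_s_of_gt hi him hv hdesc)
      rcases lt_or_gt_of_ne hin with h | h
      · exact Or.inl (Or.inr ⟨i, ⟨hi, h⟩, rfl⟩)
      · exact Or.inr ⟨i, ⟨h, by omega⟩, rfl⟩

lemma mem_P_iff {n k : ℕ} {v : Equiv.Perm ℤ} :
    v ∈ P n k ↔ v ∈ B (n + k) ∧
      Set.MapsTo v (Set.Icc ((n : ℤ) + 1) (n + k)) (Set.Icc ((n : ℤ) + 1) (n + k)) :=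
  ⟨mem_B_and_mapsTo_of_mem_P, fun h => mem_P_of_mapsTo h.1 h.2⟩

lemma exists_mem_P_mul_eq_iff {n k : ℕ} {W : Equiv.Perm ℤ} (hW : W ∈ B (n + k))
    (hW2 : ∀ i : ℤ, 1 ≤ i → i ≤ k → W (n + i) = -(n + k + 1 - i)) {w : Equiv.Perm ℤ} :
    (∃ u ∈ P n k, w = u * W) ↔ w ∈ B (n + k) ∧
      Set.MapsTo (fun x => -w x) (Set.Icc ((n : ℤ) + 1) (n + k))
        (Set.Icc ((n : ℤ) + 1) (n + k)) := by
  have hWx : ∀ x ∈ Set.Icc ((n : ℤ) + 1) (n + k), W x = -(2 * n + k + 1 - x) := fun x hx => by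
    have := hW2 (x - n) (by linarith [hx.1]) (by linarith [hx.2])
    rw [add_sub_cancel] at this
    rw [this]
    ring
  have hrefl : ∀ x ∈ Set.Icc ((n : ℤ) + 1) (n + k),
      2 * n + k + 1 - x ∈ Set.Icc ((n : ℤ) + 1) (n + k) :=
    fun x hx => ⟨by linarith [hx.2], by linarith [hx.1]⟩
  constructor
  · rintro ⟨u, hu, rfl⟩
    obtain ⟨huB, humaps⟩ := mem_P_iff.1 hu
    refine ⟨(B _).mul_mem huB hW, fun x hx => ?_⟩
    simp only [Equiv.Perm.mul_apply, hWx x hx, B_apply_neg huB, neg_neg]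
    exact humaps (hrefl x hx)
  · rintro ⟨hwB, hwmaps⟩
    refine ⟨w * W⁻¹, mem_P_iff.2 ⟨(B _).mul_mem hwB ((B _).inv_mem hW), fun x hx => ?_⟩, by group⟩
    have hWinv : W⁻¹ x = -(2 * n + k + 1 - x) := by
      rw [Equiv.Perm.inv_eq_iff_eq, B_apply_neg hW, hWx _ (hrefl x hx)]
      ring
    simp only [Equiv.Perm.mul_apply, hWinv, B_apply_neg hwB]
    exact hwmaps (hrefl x hx)

end Parabolic

section CoxeterElement

lemma cElt_eq (n k : ℕ) : cElt n k = ((List.range' (n + 1) k).map s).prod := by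
  rw [cElt, List.range'_eq_map_range, List.map_map]
  rfl

lemma cElt_zero (n : ℕ) : cElt n 0 = 1 := rfl

lemma cElt_succ_right (n k : ℕ) : cElt n (k + 1) = cElt n k * s (n + 1 + k) := by
  simp [cElt_eq, List.range'_concat]

lemma cElt_succ_left (n k : ℕ) : cElt n (k + 1) = s (n + 1) * cElt (n + 1) k := by
  simp [cElt_eq, List.range'_succ]

lemma cElt_mem_B (n k : ℕ) : cElt n k ∈ B (n + k + 1) := by
  rw [cElt_eq]
  refine Subgroup.list_prod_mem _ fun g hg => ?_
  obtain ⟨i, hi, rfl⟩ := List.mem_map.1 hg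
  rw [List.mem_range'_1] at hi
  exact s_mem_B (by omega) (by omega)

lemma cElt_apply (n k : ℕ) {x : ℤ} (hx : 0 ≤ x) :
    cElt n k x = if (n : ℤ) + 1 ≤ x ∧ x ≤ n + k then x + 1
      else if x = n + k + 1 then (n : ℤ) + 1 else x := by
  induction k generalizing x with
  | zero =>
    simp only [cElt_zero, Equiv.Perm.one_apply]
    split_ifs <;> omega
  | succ k ih =>
    rw [cElt_succ_right, Equiv.Perm.mul_apply, s_apply (by omega)]
    push_cast
    split_ifs <;> rw [ih (by omega)] <;> split_ifs <;> omega

lemma cElt_inv_apply (n k : ℕ) {x : ℤ} (hx : 0 ≤ x) :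
    (cElt n k)⁻¹ x = if x = (n : ℤ) + 1 then (n : ℤ) + k + 1
      else if (n : ℤ) + 2 ≤ x ∧ x ≤ n + k + 1 then x - 1 else x := by
  rw [Equiv.Perm.inv_eq_iff_eq, cElt_apply _ _ (by split_ifs <;> omega)]
  split_ifs <;> omega

lemma len_cElt {m n k : ℕ} (hm : n + k + 1 ≤ m) : len m (cElt n k) = k := by
  induction k with
  | zero => exact len_one m
  | succ k ih =>
    have hasc : cElt n k (n + 1 + k : ℕ) < cElt n k ((n + 1 + k : ℕ) + 1) := by
      push_cast
      rw [cElt_apply _ _ (by omega), cElt_apply _ _ (by omega)]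
      split_ifs <;> omega
    rw [cElt_succ_right, len_mul_s (by omega) (by omega) (B_mono (by omega) (cElt_mem_B n k)) hasc,
      ih (by omega)]

/-- Each letter of `c⁻¹ = s_{n+k} ⋯ s_{n+1}` swaps a negative value of `v` on `n+1, …, n+k` with
the positive value `v (n+k+1)`, so it is an ascent. -/
lemma len_mul_cElt_inv {m n k : ℕ} (hm : n + k + 1 ≤ m) {v : Equiv.Perm ℤ} (hv : v ∈ B m)
    (hneg : ∀ x : ℤ, (n : ℤ) + 1 ≤ x → x ≤ n + k → v x < 0) (hpos : 0 < v (n + k + 1)) :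
    len m (v * (cElt n k)⁻¹) = len m v + k := by
  induction k generalizing n with
  | zero => simp [cElt_zero]
  | succ k ih =>
    have ih' := ih (n := n + 1) (by omega) (fun x h1 h2 => hneg x (by push_cast at h1; omega)
      (by push_cast at h2; omega)) (by push_cast; convert hpos using 2; push_cast; ring)
    have hasc : (v * (cElt (n + 1) k)⁻¹) (n + 1 : ℕ) <
        (v * (cElt (n + 1) k)⁻¹) ((n + 1 : ℕ) + 1) := by
      simp only [Equiv.Perm.mul_apply]
      rw [cElt_inv_apply _ _ (by omega), cElt_inv_apply _ _ (by omega)]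
      push_cast
      rw [if_neg (by omega), if_neg (by omega), if_pos (by omega)]
      have := hneg (n + 1) le_rfl (by push_cast; omega)
      have : v ((n : ℤ) + 1 + k + 1) = v (n + (k + 1 : ℕ) + 1) := by push_cast; ring_nf
      omega
    rw [cElt_succ_left, mul_inv_rev, s_inv (by omega), ← mul_assoc, len_mul_s (by omega) (by omega)
      ((B m).mul_mem hv ((B m).inv_mem (B_mono (by omega) (cElt_mem_B _ _)))) hasc, ih']
    ring

lemma cElt_apply_mem_Icc_iff (n k : ℕ) (z : ℤ) :
    cElt n k z ∈ Set.Icc ((n : ℤ) + 2) (n + k + 1) ↔ z ∈ Set.Icc ((n : ℤ) + 1) (n + k) := by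
  simp only [Set.mem_Icc]
  rcases le_or_gt 0 z with hz | hz
  · rw [cElt_apply _ _ hz]
    split_ifs <;> omega
  · rw [show z = -(-z) by ring, B_apply_neg (cElt_mem_B n k), cElt_apply _ _ (by omega)]
    split_ifs <;> omega

lemma mapsTo_neg_conj_cElt_iff (n k : ℕ) (w : Equiv.Perm ℤ) :
    Set.MapsTo (fun x => -w x) (Set.Icc ((n : ℤ) + 1) (n + k)) (Set.Icc ((n : ℤ) + 1) (n + k)) ↔
      Set.MapsTo (fun x => -(cElt n k * w * (cElt n k)⁻¹) x) (Set.Icc ((n : ℤ) + 2) (n + k + 1))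
        (Set.Icc ((n : ℤ) + 2) (n + k + 1)) := by
  have hneg : ∀ z, -cElt n k z = cElt n k (-z) := fun z => (B_apply_neg (cElt_mem_B n k) z).symm
  simp only [Equiv.Perm.mul_apply, hneg]
  constructor
  · intro h y hy
    rw [cElt_apply_mem_Icc_iff]
    exact h ((cElt_apply_mem_Icc_iff n k _).1 (by simpa using hy))
  · intro h x hx
    rw [← cElt_apply_mem_Icc_iff n k] at hx ⊢
    simpa using h hx

lemma eq_s_of_len_cElt_inv_mul_lt {m n k : ℕ} (hm : n + k + 1 ≤ m) {g : Equiv.Perm ℤ}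
    (hg : g ∈ gens m) (hlt : len m ((cElt n k)⁻¹ * g) < len m (cElt n k)⁻¹) : g = s (n + 1) := by
  have hc := (B m).inv_mem (B_mono hm (cElt_mem_B n k))
  rcases hg with rfl | ⟨i, ⟨hi, him⟩, rfl⟩
  · have hpos : 0 < (cElt n k)⁻¹ 1 := by
      rw [cElt_inv_apply _ _ zero_le_one]
      split_ifs <;> omega
    have := len_mul_t (by omega) hc hpos
    omega
  · by_contra hne
    have hi' : i ≠ n + 1 := fun h => hne (by rw [h])
    have hasc : (cElt n k)⁻¹ i < (cElt n k)⁻¹ (i + 1) := by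
      rw [cElt_inv_apply _ _ (by omega), cElt_inv_apply _ _ (by omega)]
      split_ifs <;> omega
    have := len_mul_s hi him hc hasc
    omega

lemma eq_of_reduced_word_cElt {m n k : ℕ} (hm : n + k + 1 ≤ m) {L : List (Equiv.Perm ℤ)}
    (hL : ∀ g ∈ L, g ∈ gens m) (hprod : L.prod = cElt n k) (hlen : L.length = k) :
    L = (List.range' (n + 1) k).map s := by
  induction k generalizing n L with
  | zero => simpa using hlen
  | succ k ih =>
    obtain ⟨g, L, rfl⟩ := List.exists_cons_of_length_eq_add_one hlen
    have hg := hL g List.mem_cons_self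
    have hL' : ∀ x ∈ L, x ∈ gens m := fun x hx => hL x (List.mem_cons_of_mem _ hx)
    have hprod' : L.prod = g * cElt n (k + 1) := by
      rw [← hprod, List.prod_cons, ← mul_assoc, gens_mul_self hg, one_mul]
    have hgs : g = s (n + 1) := by
      have hcB := B_mono hm (cElt_mem_B n (k + 1))
      refine eq_s_of_len_cElt_inv_mul_lt hm hg ?_
      rw [len_inv (by omega) hcB, len_cElt hm,
        ← len_inv (by omega) ((B m).mul_mem ((B m).inv_mem hcB) (gens_mem_B (by omega) hg)),
        mul_inv_rev, inv_inv, inv_eq_of_mul_eq_one_left (gens_mul_self hg), ← hprod']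
      have := len_le_length hL' rfl
      simp only [List.length_cons] at hlen
      omega
    subst hgs
    rw [List.range'_succ, List.map_cons, ih (n := n + 1) (by omega) hL'
      (by rw [hprod', cElt_succ_left, ← mul_assoc, s_mul_self (by omega), one_mul])
      (by simpa using hlen)]

/-- Along a subword of `s_a s_{a+1} ⋯ s_{a+c-1}`, the point `a + c` can only move down one step
at a time, and reaches `a` only if no letter is skipped. -/
lemma sublist_prod_apply {a c : ℕ} (ha : 1 ≤ a) {J : List ℕ} (hJ : J.Sublist (List.range' a c)) :
    (J.map s).prod (a + c) ∈ Set.Icc (a : ℤ) (a + c) ∧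
      ((J.map s).prod (a + c) = a → J = List.range' a c) := by
  induction c generalizing a J with
  | zero =>
    obtain rfl := List.sublist_nil.1 hJ
    simp
  | succ c ih =>
    rw [List.range'_succ] at hJ
    have hac : ((a : ℤ) + (c + 1 : ℕ)) = (a + 1 : ℕ) + c := by push_cast; ring
    rcases List.sublist_cons_iff.1 hJ with hJ' | ⟨J', rfl, hJ'⟩
    · obtain ⟨⟨h1, h2⟩, -⟩ := ih (a := a + 1) (by omega) hJ'
      rw [hac]
      push_cast at h1 h2 ⊢
      exact ⟨⟨by omega, by omega⟩, fun h => by omega⟩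
    · obtain ⟨⟨h1, h2⟩, hfull⟩ := ih (a := a + 1) (by omega) hJ'
      rw [List.map_cons, List.prod_cons, Equiv.Perm.mul_apply, hac, s_apply ha,
        List.range'_succ]
      push_cast at h1 h2 hfull ⊢
      split_ifs <;> first
        | exact ⟨⟨by omega, by omega⟩, fun h => by omega⟩
        | exact ⟨⟨by omega, by omega⟩, fun _ => by rw [hfull (by omega)]⟩

end CoxeterElement

section Conjugation

lemma len_conj_cElt {n k : ℕ} {w : Equiv.Perm ℤ} (hw : w ∈ B (n + k))
    (hflip : Set.MapsTo (fun x => -w x) (Set.Icc ((n : ℤ) + 1) (n + k))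
      (Set.Icc ((n : ℤ) + 1) (n + k))) :
    len (n + k + 1) (cElt n k * w * (cElt n k)⁻¹) =
      len (n + k + 1) (cElt n k) + len (n + k + 1) w + len (n + k + 1) (cElt n k)⁻¹ := by
  have hm : 1 ≤ n + k + 1 := by omega
  have hc := cElt_mem_B n k
  have hw' : w ∈ B (n + k + 1) := B_mono (by omega) hw
  have hwfix : w (n + k + 1) = n + k + 1 :=
    B_apply_of_lt_abs hw (by rw [abs_of_nonneg (by omega)]; push_cast; omega)
  have hwc : len (n + k + 1) (w * (cElt n k)⁻¹) = len (n + k + 1) w + k := by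
    refine len_mul_cElt_inv le_rfl hw' (fun x h1 h2 => ?_) (by rw [hwfix]; omega)
    have := hflip ⟨h1, h2⟩
    simp only [Set.mem_Icc] at this
    omega
  have hcw : len (n + k + 1) (cElt n k * w⁻¹ * (cElt n k)⁻¹) =
      len (n + k + 1) (cElt n k * w⁻¹) + k := by
    refine len_mul_cElt_inv le_rfl ((B _).mul_mem hc ((B _).inv_mem hw')) (fun x h1 h2 => ?_) ?_
    · have hz := (cElt_apply_mem_Icc_iff n k _).2 (mapsTo_neg_inv hw hflip ⟨h1, h2⟩)
      rw [B_apply_neg hc, Set.mem_Icc] at hz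
      rw [Equiv.Perm.mul_apply]
      omega
    · have hwinv : w⁻¹ (n + k + 1) = n + k + 1 := by rw [Equiv.Perm.inv_eq_iff_eq, hwfix]
      rw [Equiv.Perm.mul_apply, hwinv, cElt_apply _ _ (by omega), if_neg (by omega), if_pos rfl]
      omega
  have hinv_cw : len (n + k + 1) (cElt n k * w⁻¹) = len (n + k + 1) (w * (cElt n k)⁻¹) := by
    rw [← len_inv hm ((B _).mul_mem hw' ((B _).inv_mem hc)), mul_inv_rev, inv_inv]
  have hinv_conj : len (n + k + 1) (cElt n k * w * (cElt n k)⁻¹) =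
      len (n + k + 1) (cElt n k * w⁻¹ * (cElt n k)⁻¹) := by
    rw [← len_inv hm ((B _).mul_mem ((B _).mul_mem hc hw') ((B _).inv_mem hc))]
    group
  rw [hinv_conj, hcw, hinv_cw, hwc, len_inv hm hc, len_cElt le_rfl]
  ring

lemma cElt_inv_mul_mul_notMem_B {n k : ℕ} {w x : Equiv.Perm ℤ}
    (hflip : Set.MapsTo (fun x => -w x) (Set.Icc ((n : ℤ) + 2) (n + k + 1))
      (Set.Icc ((n : ℤ) + 2) (n + k + 1)))
    (hx : bruhatLT (n + k + 1) x (cElt n k)) : (cElt n k)⁻¹ * w * x ∉ B (n + k) := by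
  obtain ⟨hne, L, hL, hprod, hlen, L', hsub, rfl⟩ := hx
  rw [len_cElt le_rfl] at hlen
  rw [eq_of_reduced_word_cElt le_rfl hL hprod hlen] at hsub
  obtain ⟨J, hJ, rfl⟩ := List.sublist_map_iff.1 hsub
  obtain ⟨hmem, hfull⟩ := sublist_prod_apply (a := n + 1) (by omega) hJ
  rw [show ((n + 1 : ℕ) : ℤ) + k = n + k + 1 by push_cast; ring] at hmem hfull
  set y := (J.map s).prod (n + k + 1)
  have hy : y ∈ Set.Icc ((n : ℤ) + 2) (n + k + 1) := by
    have hy1 : y ≠ (n + 1 : ℕ) := fun h => hne (by rw [hfull h, cElt_eq])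
    simp only [Set.mem_Icc] at hmem ⊢
    push_cast at hmem hy1
    omega
  intro hB
  have hfix := B_apply_of_lt_abs hB (x := n + k + 1) (by rw [abs_of_nonneg (by omega)]; omega)
  have hz := hflip hy
  simp only [Set.mem_Icc] at hy hz
  rw [Equiv.Perm.mul_apply, Equiv.Perm.mul_apply, ← neg_neg (w y),
    B_apply_neg ((B _).inv_mem (cElt_mem_B n k)), cElt_inv_apply _ _ (by omega)] at hfix
  split_ifs at hfix <;> omega

end Conjugation

theorem baby_succ_general (n k : ℕ)
    (Wnk : Equiv.Perm ℤ) (hWnk : Wnk ∈ B (n + k))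
    (hWnk2 : ∀ i : ℤ, 1 ≤ i → i ≤ (k : ℤ) → Wnk ((n : ℤ) + i) = -((n : ℤ) + (k : ℤ) + 1 - i))
    (Wnk' : Equiv.Perm ℤ) (hWnk' : Wnk' ∈ B (n + k + 1))
    (hWnk'2 : ∀ i : ℤ, 1 ≤ i → i ≤ (k : ℤ) →
      Wnk' ((n : ℤ) + 1 + i) = -((n : ℤ) + (k : ℤ) + 2 - i)) :
    (∀ w : Equiv.Perm ℤ, (∃ u ∈ P n k, w = u * Wnk) →
      len (n + k + 1) (cElt n k * w * (cElt n k)⁻¹)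
          = len (n + k + 1) (cElt n k) + len (n + k + 1) w + len (n + k + 1) (cElt n k)⁻¹ ∧
        ∃ u ∈ P (n + 1) k, cElt n k * w * (cElt n k)⁻¹ = u * Wnk') ∧
    (∀ w : Equiv.Perm ℤ, (∃ u ∈ P (n + 1) k, w = u * Wnk') →
      (∀ x : Equiv.Perm ℤ, bruhatLT (n + k + 1) x (cElt n k) →
        (cElt n k)⁻¹ * w * x ∉ B (n + k)) ∧
      ((∃ u ∈ P n k, (cElt n k)⁻¹ * w * cElt n k = u * Wnk) ↔
        (cElt n k)⁻¹ * w * cElt n k ∈ B (n + k))) := by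
  have coset := fun w => exists_mem_P_mul_eq_iff hWnk hWnk2 (w := w)
  have coset' := fun w => exists_mem_P_mul_eq_iff (n := n + 1) (k := k) (W := Wnk')
    (by rwa [Nat.add_right_comm]) (fun i h1 h2 => by push_cast; rw [hWnk'2 i h1 h2]; ring) (w := w)
  rw [Nat.add_right_comm, show ((n + 1 : ℕ) : ℤ) + 1 = n + 2 by push_cast; ring,
    show ((n + 1 : ℕ) : ℤ) + k = n + k + 1 by push_cast; ring] at coset'
  refine ⟨fun w hw => ?_, fun w hw => ?_⟩
  · obtain ⟨hwB, hflip⟩ := (coset w).1 hw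
    have hc := cElt_mem_B n k
    refine ⟨len_conj_cElt hwB hflip, (coset' _).2 ⟨?_, (mapsTo_neg_conj_cElt_iff n k w).1 hflip⟩⟩
    exact (B _).mul_mem ((B _).mul_mem hc (B_mono (by omega) hwB)) ((B _).inv_mem hc)
  · obtain ⟨-, hflip⟩ := (coset' w).1 hw
    refine ⟨fun x hx => cElt_inv_mul_mul_notMem_B hflip hx, ?_⟩
    rw [coset, and_iff_left_iff_imp]
    intro _
    rw [mapsTo_neg_conj_cElt_iff]
    simpa [mul_assoc] using hflip

theorem baby_succ (n k : ℕ) (hk : 2 ≤ k)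
    (Wnk : Equiv.Perm ℤ) (hWnk : Wnk ∈ B (n + k))
    (hWnk1 : ∀ i : ℤ, 1 ≤ i → i ≤ (n : ℤ) → Wnk i = i)
    (hWnk2 : ∀ i : ℤ, 1 ≤ i → i ≤ (k : ℤ) → Wnk ((n : ℤ) + i) = -((n : ℤ) + (k : ℤ) + 1 - i))
    (Wnk' : Equiv.Perm ℤ) (hWnk' : Wnk' ∈ B (n + k + 1))
    (hWnk'1 : ∀ i : ℤ, 1 ≤ i → i ≤ (n : ℤ) + 1 → Wnk' i = i)
    (hWnk'2 : ∀ i : ℤ, 1 ≤ i → i ≤ (k : ℤ) →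
      Wnk' ((n : ℤ) + 1 + i) = -((n : ℤ) + (k : ℤ) + 2 - i)) :
    (∀ w : Equiv.Perm ℤ, (∃ u ∈ P n k, w = u * Wnk) →
      len (n + k + 1) (cElt n k * w * (cElt n k)⁻¹)
          = len (n + k + 1) (cElt n k) + len (n + k + 1) w + len (n + k + 1) (cElt n k)⁻¹ ∧
        ∃ u ∈ P (n + 1) k, cElt n k * w * (cElt n k)⁻¹ = u * Wnk') ∧
    (∀ w : Equiv.Perm ℤ, (∃ u ∈ P (n + 1) k, w = u * Wnk') →
      (∀ x : Equiv.Perm ℤ, bruhatLT (n + k + 1) x (cElt n k) →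
        (cElt n k)⁻¹ * w * x ∉ B (n + k)) ∧
      ((∃ u ∈ P n k, (cElt n k)⁻¹ * w * cElt n k = u * Wnk) ↔
        (cElt n k)⁻¹ * w * cElt n k ∈ B (n + k))) :=
  baby_succ_general n k Wnk hWnk hWnk2 Wnk' hWnk' hWnk'2

end PaperB
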